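/- Let S and S′ be states with S ↦ S′ such that every rule applied in S → S′ is an Increment rule. Set n = n(S), n′ = n(S′), and ℓ = ℓ(S). Then for every index i with 1 ≤ i ≤ ℓ one has a_i(S′) = a_i(S) + d_i(n, n′), and a_0(S′) = a_0(S) − d_0(n, n′). -/

import Mathlib

/-!
An Increment step at the rightmost odd entry `a_i` adds `1` to `a_{i+1}` and subtracts `1` from
`a_0`. It preserves the sum of the entries and adds `1` to each suffix sum `a_{k+1} + ⋯ + a_ℓ`
with `k ≤ i`, so it flips exactly the binary digits `0, …, i` of `n`. As the entries below `a_i`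
are even, these digits read `1 ⋯ 1 0` or `0 ⋯ 0 1` according as the sum is odd or even: `n` moves
by `σ = ±1`, and the larger of the two values is `2^i · odd`. For such a step `⟨n/2^k⟩` changes,
by one, exactly for `k = 0` and `k = i + 1`, just as the entries do; along a run of Increment
rules `n` is monotone, so these changes add up to `d_k`.
-/

open scoped Classical

namespace Skelet17

/-- The five kinds of transition rules. -/
inductive Rule
  | overflow | halt | zero | halve | increment
  deriving DecidableEq

/-- A state `(a_ℓ, …, a_1, a_0)` (written left to right, `a_0` rightmost) is stored
as the list `[a_0, a_1, …, a_ℓ]`, i.e. with the *rightmost* entry first. -/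
abbrev State := List ℤ

/-- The leftmost entry `a_ℓ` of a state. -/
def leftmost (S : State) : ℤ := S.getLastD 0

/-- The entry `a_i(S)`. -/
def entry (S : State) (i : ℕ) : ℤ := S.getD i 0

/-- `ℓ(S) = |S| - 1`. -/
def ell (S : State) : ℕ := S.length - 1

/-- The Overflow rule applies: the leftmost entry is odd and all other entries are even. -/
def OverflowCond (S : State) : Prop := Odd (leftmost S) ∧ ∀ x ∈ S.dropLast, Even x

/-- The Halt rule applies: all entries are even and the two leftmost entries are `0`. -/
def HaltCond (S : State) : Prop :=
  (∀ x ∈ S, Even x) ∧ S.getLastD 1 = 0 ∧ S.dropLast.getLastD 1 = 0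

/-- The Zero rule applies: all entries are even and the Halt rule does not apply. -/
def ZeroCond (S : State) : Prop := (∀ x ∈ S, Even x) ∧ ¬ HaltCond S

/-- The Halve rule applies: `a_0 = -1` and none of the earlier rules applies. -/
def HalveCond (S : State) : Prop :=
  ¬ OverflowCond S ∧ ¬ HaltCond S ∧ ¬ ZeroCond S ∧ S.headD 0 = -1

/-- The rule applied to a state (the first matching rule). -/
noncomputable def ruleOf (S : State) : Rule :=
  if OverflowCond S then .overflow
  else if HaltCond S then .halt
  else if ZeroCond S then .zero
  else if S.headD 0 = -1 then .halve
  else .increment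

/-- The transition function `P`.  (On a Halt state the process stops; we set `P S = S` there.)
Recall the list stores `a_0` first, so e.g. the Overflow rule
`(2a_ℓ+1, 2a_{ℓ-1}, …, 2a_0) ↦ (0, 2a_ℓ+2, 2a_{ℓ-1}, …, 2a_0)` appends a `0` at the end of
the list and adds `1` to the previously last element. -/
noncomputable def P (S : State) : State :=
  match ruleOf S with
  | .overflow => S.dropLast ++ [leftmost S + 1, 0]
  | .halt => S
  | .zero => (S.set 0 (S.headD 0 - 1)).set (S.length - 1) (leftmost S + 1) ++ [0, 0]
  | .halve => S.tail
  | .increment =>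
      let i := S.findIdx (fun x => x % 2 != 0)   -- index of the rightmost odd entry
      (S.set (i + 1) (S.getD (i + 1) 0 + 1)).set 0 (S.headD 0 - 1)

/-- `S ↦ T` : some iterate of `P` sends `S` to `T`. -/
def Reaches (S T : State) : Prop := ∃ m : ℕ, P^[m] S = T

/-- `σ(S) = +1` if the sum of the entries is odd, `-1` if it is even. -/
noncomputable def sigma (S : State) : ℤ := if Odd S.sum then 1 else -1

/-- `n(S)`: the natural number whose Gray code digits (least significant first) are
`a_1 mod 2, a_2 mod 2, …, a_ℓ mod 2`.  Equivalently (standard Gray-code decoding),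
bit `i` of `n(S)` is the parity of `a_{i+1} + ⋯ + a_ℓ`. -/
def nOf (S : State) : ℕ :=
  ∑ i ∈ Finset.range (ell S),
    2 ^ i * ((∑ j ∈ Finset.Icc (i + 1) (ell S), entry S j) % 2).toNat

/-- `⟨a / 2^j⟩` : the nearest integer to `a / 2^j`, rounding half-integers up. -/
def nearest (j a : ℕ) : ℕ := (2 * a + 2 ^ j) / 2 ^ (j + 1)

/-- `d_j(a, b) = |⟨a/2^j⟩ - ⟨b/2^j⟩|`. -/
def dd (j a b : ℕ) : ℕ := Nat.dist (nearest j a) (nearest j b)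

/-- `S_k = (0, 2, 2^2, …, 2^{2k}, 0)`. -/
def Sk (k : ℕ) : State :=
  0 :: (((List.range (2 * k)).map fun i => (2 : ℤ) ^ (2 * k - i)) ++ [0])

/-- An empty state: `n(E) = 0`, `σ(E) = -1`, and the next rule applied is not Halt. -/
def IsEmptyState (E : State) : Prop :=
  E ≠ [] ∧ nOf E = 0 ∧ sigma E = -1 ∧ ruleOf E ≠ Rule.halt

/-- `m` is the first positive time at which the trajectory of `E` is at an empty state. -/
def NextEmptyAt (E : State) (m : ℕ) : Prop :=
  0 < m ∧ IsEmptyState (P^[m] E) ∧ ∀ t, 0 < t → t < m → ¬ IsEmptyState (P^[t] E)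

/-- `N(E)` : the next empty state after `E` (junk value `[]` if it does not exist). -/
noncomputable def N (E : State) : State :=
  if h : ∃ m, NextEmptyAt E m then P^[h.choose] E else []

/-- The rule applied at time `j` belongs to `T_E`, the sequence of rules from `E` to the
next empty state after `E` (all rules after `E` when no next empty state exists). -/
def InTE (E : State) (j : ℕ) : Prop := ∀ t, 0 < t → t ≤ j → ¬ IsEmptyState (P^[t] E)

/-- Weakly embanked: `T_E` consists of one Zero rule at the start and contains at least two
Halve rules, and all other rules before the second Halve rule are Increment rules. -/
def WeaklyEmbanked (E : State) : Prop :=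
  IsEmptyState E ∧
  ∃ j₁ j₂, 0 < j₁ ∧ j₁ < j₂ ∧ InTE E j₂ ∧
    ruleOf (P^[j₁] E) = Rule.halve ∧ ruleOf (P^[j₂] E) = Rule.halve ∧
    ∀ t, 0 < t → t < j₂ → t ≠ j₁ → ruleOf (P^[t] E) = Rule.increment

/-- Embanked: the next empty state `N(E)` exists and the non-Increment rules of `T_E` consist
of exactly one Zero rule at the start and exactly two Halve rules elsewhere. -/
def Embanked (E : State) : Prop :=
  IsEmptyState E ∧
  ∃ m j₁ j₂, NextEmptyAt E m ∧ 0 < j₁ ∧ j₁ < j₂ ∧ j₂ < m ∧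
    ruleOf (P^[j₁] E) = Rule.halve ∧ ruleOf (P^[j₂] E) = Rule.halve ∧
    ∀ t, 0 < t → t < m → t ≠ j₁ → t ≠ j₂ → ruleOf (P^[t] E) = Rule.increment

/-- `h_i(E)` (`i ∈ {1,2}`): the value of `n` at the state immediately *after* the `i`-th
Halve rule applied after `E`. -/
noncomputable def hVal (E : State) (i : ℕ) : ℕ :=
  nOf (P^[Nat.nth (fun j => ruleOf (P^[j] E) = Rule.halve) (i - 1) + 1] E)

/-- `s_i(E)` (`i ∈ {1,2}`): the value of `n` at the state immediately *before* the `i`-th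
Halve rule applied after `E`. -/
noncomputable def sVal (E : State) (i : ℕ) : ℕ :=
  nOf (P^[Nat.nth (fun j => ruleOf (P^[j] E) = Rule.halve) (i - 1)] E)

/-- `E[i]` : the state `E` with the entry `a_i` replaced by `a_i + 2`. -/
def bump (E : State) (i : ℕ) : State := E.set i (E.getD i 0 + 2)

/-- `N'(E) = N^{⌈(i+1)/2⌉}(E)` for an embanked state `E` with `N(E) = E[i]`
(junk value `E` if no such `i` exists). -/
noncomputable def N' (E : State) : State :=
  if h : ∃ i, i < E.length ∧ N E = bump E i then N^[(h.choose + 2) / 2] E else E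

/-- A rooted embanked state: an embanked state obtained from `S_k` by applying `N'`
some number of times. -/
def RootedEmbanked (k : ℕ) (E : State) : Prop :=
  Embanked E ∧ ∃ e : ℕ, N'^[e] (Sk k) = E

/-- `κ_{E→E'}(j)` : the number of steps `S ↦ N(S)` with `N(S) = S[j]` along the chain
`E, N(E), N²(E), …, N^[t](E) = E'`. -/
noncomputable def kappa (E : State) (t j : ℕ) : ℕ :=
  ((Finset.range t).filter fun s => N (N^[s] E) = bump (N^[s] E) j).card

open Finset

lemma nearest_zero (n : ℕ) : nearest 0 n = n := by
  simp only [nearest]; omega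

lemma nearest_succ (k n : ℕ) : nearest (k + 1) n = (n + 2 ^ k) / 2 ^ (k + 1) := by
  rw [nearest, show 2 * n + 2 ^ (k + 1) = 2 * (n + 2 ^ k) by ring, pow_succ' 2 (k + 1),
    Nat.mul_div_mul_left _ _ two_pos]

lemma nearest_mono (k : ℕ) : Monotone (nearest k) :=
  fun _ _ h => Nat.div_le_div_right (by omega)

lemma two_pow_succ_dvd_two_pow_mul_odd_add_two_pow_iff {i k q : ℕ} :
    2 ^ (k + 1) ∣ 2 ^ i * (2 * q + 1) + 2 ^ k ↔ k = i := by
  have not_dvd : ∀ j, ¬ 2 ^ (j + 1) ∣ 2 ^ j := fun j => by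
    rw [Nat.pow_dvd_pow_iff_le_right one_lt_two]; omega
  rcases lt_trichotomy k i with hki | rfl | hki
  · have hdvd : 2 ^ (k + 1) ∣ 2 ^ i * (2 * q + 1) := (pow_dvd_pow 2 hki).mul_right _
    exact iff_of_false (fun h => not_dvd k ((Nat.dvd_add_right hdvd).mp h)) hki.ne
  · exact iff_of_true ⟨q + 1, by ring⟩ rfl
  · obtain ⟨r, rfl⟩ : ∃ r, k = i + 1 + r := ⟨k - (i + 1), by omega⟩
    refine iff_of_false (fun h => not_dvd i ?_) (by omega)
    have h' : 2 ^ (i + 1) ∣ 2 ^ i * (2 * q + 1) + 2 ^ (i + 1 + r) :=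
      (pow_dvd_pow 2 (by omega)).trans h
    rw [show 2 ^ i * (2 * q + 1) + 2 ^ (i + 1 + r) = 2 ^ (i + 1) * (q + 2 ^ r) + 2 ^ i by ring]
      at h'
    exact (Nat.dvd_add_right (dvd_mul_right _ _)).mp h'

lemma nearest_add_one {n i q : ℕ} (h : n + 1 = 2 ^ i * (2 * q + 1)) (k : ℕ) :
    nearest k (n + 1) = nearest k n + if k = 0 ∨ k = i + 1 then 1 else 0 := by
  cases k with
  | zero => simp [nearest_zero]
  | succ k =>
    have hdvd : 2 ^ (k + 1) ∣ n + 2 ^ k + 1 ↔ k + 1 = 0 ∨ k + 1 = i + 1 := by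
      rw [show n + 2 ^ k + 1 = 2 ^ i * (2 * q + 1) + 2 ^ k by omega,
        two_pow_succ_dvd_two_pow_mul_odd_add_two_pow_iff]
      omega
    rw [nearest_succ, nearest_succ, add_right_comm, Nat.succ_div, if_congr hdvd rfl rfl]

lemma dd_add_one {n i q : ℕ} (h : n + 1 = 2 ^ i * (2 * q + 1)) (k : ℕ) :
    dd k n (n + 1) = if k = 0 ∨ k = i + 1 then 1 else 0 := by
  simp only [dd, nearest_add_one h k, Nat.dist]
  omega

lemma dd_comm (k a b : ℕ) : dd k a b = dd k b a := Nat.dist_comm _ _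

lemma dd_self (k a : ℕ) : dd k a a = 0 := Nat.dist_self _

lemma dd_add_of_between {k a b c : ℕ} (h : a ≤ b ∧ b ≤ c ∨ c ≤ b ∧ b ≤ a) :
    dd k a c = dd k a b + dd k b c := by
  rcases h with ⟨h₁, h₂⟩ | ⟨h₁, h₂⟩ <;>
  · have := nearest_mono k h₁
    have := nearest_mono k h₂
    simp only [dd, Nat.dist]
    omega

lemma sum_two_pow_mul_carry {b b' : ℕ → ℕ} {i L : ℕ} (hiL : i < L)
    (hlow : ∀ k < i, b k = 1 ∧ b' k = 0) (hb : b i = 0) (hb' : b' i = 1)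
    (hhigh : ∀ k, i < k → b' k = b k) :
    ∃ q, ∑ k ∈ range L, 2 ^ k * b k + 1 = 2 ^ i * (2 * q + 1) ∧
      ∑ k ∈ range L, 2 ^ k * b' k = ∑ k ∈ range L, 2 ^ k * b k + 1 := by
  obtain ⟨M, rfl⟩ : ∃ M, L = i + 1 + M := ⟨L - (i + 1), by omega⟩
  have hlow_b : ∑ k ∈ range (i + 1), 2 ^ k * b k = 2 ^ i - 1 := by
    rw [sum_range_succ, hb, mul_zero, add_zero,
      sum_congr rfl fun k hk => by rw [(hlow k (mem_range.mp hk)).1, mul_one],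
      Nat.geomSum_eq le_rfl]
    simp
  have hlow_b' : ∑ k ∈ range (i + 1), 2 ^ k * b' k = 2 ^ i := by
    rw [sum_range_succ, hb', mul_one,
      sum_eq_zero fun k hk => by rw [(hlow k (mem_range.mp hk)).2, mul_zero], zero_add]
  have htail : ∀ c : ℕ → ℕ, ∑ k ∈ range M, 2 ^ (i + 1 + k) * c (i + 1 + k) =
      2 ^ (i + 1) * ∑ k ∈ range M, 2 ^ k * c (i + 1 + k) := fun c => by
    rw [mul_sum]
    exact sum_congr rfl fun k _ => by ring
  have hhigh' : ∀ k ∈ range M, 2 ^ k * b' (i + 1 + k) = 2 ^ k * b (i + 1 + k) :=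
    fun k _ => by rw [hhigh _ (by omega)]
  have hpos := Nat.one_le_two_pow (n := i)
  refine ⟨∑ k ∈ range M, 2 ^ k * b (i + 1 + k), ?_, ?_⟩
  · rw [sum_range_add _ (i + 1), hlow_b, htail]
    zify [hpos]
    ring
  · rw [sum_range_add _ (i + 1), sum_range_add _ (i + 1), hlow_b, hlow_b', htail, htail,
      sum_congr rfl hhigh']
    omega

lemma entry_eq_getElem {S : State} {k : ℕ} (hk : k < S.length) : entry S k = S[k] :=
  List.getD_eq_getElem _ _ hk

lemma entry_set {S : State} {j : ℕ} (hj : j < S.length) (v : ℤ) (k : ℕ) :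
    entry (S.set j v) k = if k = j then v else entry S k := by
  by_cases hkj : k = j
  · simp [entry, hkj, hj]
  · simp [entry, hkj, Ne.symm hkj]

lemma headD_eq_entry (S : State) : S.headD 0 = entry S 0 := by
  cases S <;> rfl

lemma leftmost_eq_entry (S : State) : leftmost S = entry S (S.length - 1) := by
  rcases S.eq_nil_or_concat with rfl | ⟨L, a, rfl⟩ <;> simp [leftmost, entry]

lemma sum_eq_sum_entry (S : State) : S.sum = ∑ j ∈ range S.length, entry S j := by
  induction S with
  | nil => rfl
  | cons a t ih =>
    rw [List.sum_cons, ih, List.length_cons, sum_range_succ', add_comm]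
    rfl

def suffixSum (S : State) (k : ℕ) : ℤ := ∑ j ∈ Icc (k + 1) (ell S), entry S j

def binaryDigit (S : State) (k : ℕ) : ℕ := (suffixSum S k % 2).toNat

lemma nOf_eq_sum_binaryDigit (S : State) :
    nOf S = ∑ k ∈ range (ell S), 2 ^ k * binaryDigit S k := rfl

lemma sum_eq_sum_range_add_suffixSum {S : State} {k : ℕ} (hk : k < S.length) :
    S.sum = ∑ j ∈ range (k + 1), entry S j + suffixSum S k := by
  rw [sum_eq_sum_entry, suffixSum, ell, ← Ico_add_one_right_eq_Icc, range_eq_Ico, range_eq_Ico,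
    sum_Ico_consecutive _ (by omega) (by omega), Nat.sub_add_cancel (by omega)]

/-- The index used by the Increment rule of `P`; it is `S.length` when all entries are even. -/
def rightmostOddIdx (S : State) : ℕ := S.findIdx (fun x => x % 2 != 0)

section Increment

variable {S : State}

lemma even_entry_of_lt_rightmostOddIdx {j : ℕ} (hj : j < rightmostOddIdx S) :
    Even (entry S j) := by
  have := List.not_of_lt_findIdx hj
  rw [entry_eq_getElem (hj.trans_le List.findIdx_le_length), Int.even_iff]
  simpa using this

lemma odd_entry_rightmostOddIdx (h : rightmostOddIdx S < S.length) :
    Odd (entry S (rightmostOddIdx S)) := by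
  unfold rightmostOddIdx at h ⊢
  have hodd := List.findIdx_getElem (w := h)
  rw [entry_eq_getElem h, Int.odd_iff]
  simpa using hodd

lemma rightmostOddIdx_lt_length_of_increment (hr : ruleOf S = Rule.increment) :
    rightmostOddIdx S < S.length := by
  have hcond : ¬ HaltCond S ∧ ¬ ZeroCond S := by
    unfold ruleOf at hr
    split_ifs at hr with h₁ h₂ h₃
    exact ⟨h₂, h₃⟩
  apply List.findIdx_lt_length_of_exists
  by_contra! hall
  exact hcond.2 ⟨fun x hx => by simpa [Int.even_iff] using hall x hx, hcond.1⟩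

-- Otherwise the Overflow rule would apply.
lemma rightmostOddIdx_add_one_lt_length_of_increment (hr : ruleOf S = Rule.increment) :
    rightmostOddIdx S + 1 < S.length := by
  have hi := rightmostOddIdx_lt_length_of_increment hr
  have hover : ¬ OverflowCond S := by
    unfold ruleOf at hr
    split_ifs at hr with h₁
    exact h₁
  by_contra! hlast
  refine hover ⟨?_, fun x hx => ?_⟩
  · rw [leftmost_eq_entry, show S.length - 1 = rightmostOddIdx S by omega]
    exact odd_entry_rightmostOddIdx hi
  · obtain ⟨j, hj, rfl⟩ := List.mem_iff_getElem.mp hx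
    rw [List.getElem_dropLast, ← entry_eq_getElem]
    exact even_entry_of_lt_rightmostOddIdx (by simp at hj; omega)

lemma P_of_increment (hr : ruleOf S = Rule.increment) :
    P S = (S.set (rightmostOddIdx S + 1) (entry S (rightmostOddIdx S + 1) + 1)).set 0
      (entry S 0 - 1) := by
  unfold P
  rw [hr, headD_eq_entry]
  rfl

lemma length_P_of_increment (hr : ruleOf S = Rule.increment) : (P S).length = S.length := by
  simp [P_of_increment hr]

lemma ell_P_of_increment (hr : ruleOf S = Rule.increment) : ell (P S) = ell S := by
  rw [ell, ell, length_P_of_increment hr]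

lemma entry_P_of_increment (hr : ruleOf S = Rule.increment) (k : ℕ) :
    entry (P S) k = entry S k + (if k = rightmostOddIdx S + 1 then 1 else 0) -
      (if k = 0 then 1 else 0) := by
  have hi := rightmostOddIdx_add_one_lt_length_of_increment hr
  rw [P_of_increment hr, entry_set (by simp; omega), entry_set hi]
  split_ifs <;> subst_vars <;> omega

lemma sum_P_of_increment (hr : ruleOf S = Rule.increment) : (P S).sum = S.sum := by
  have hi := rightmostOddIdx_add_one_lt_length_of_increment hr
  simp only [sum_eq_sum_entry, length_P_of_increment hr, entry_P_of_increment hr,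
    sum_sub_distrib, sum_add_distrib, sum_ite_eq', mem_range, hi, if_true]
  simp only [show 0 < S.length by omega, if_true, add_sub_cancel_right]

lemma suffixSum_P_of_increment (hr : ruleOf S = Rule.increment) (k : ℕ) :
    suffixSum (P S) k = suffixSum S k + if k ≤ rightmostOddIdx S then 1 else 0 := by
  have hi := rightmostOddIdx_add_one_lt_length_of_increment hr
  simp only [suffixSum, ell_P_of_increment hr, entry_P_of_increment hr, sum_sub_distrib,
    sum_add_distrib, sum_ite_eq', mem_Icc]
  simp only [ell]
  split_ifs <;> omega

lemma suffixSum_emod_two_of_lt_rightmostOddIdx {k : ℕ} (hk : k < rightmostOddIdx S)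
    (hi : rightmostOddIdx S < S.length) : suffixSum S k % 2 = S.sum % 2 := by
  have hprefix : Even (∑ j ∈ range (k + 1), entry S j) :=
    even_sum _ fun j hj => even_entry_of_lt_rightmostOddIdx (by simp at hj; omega)
  rw [sum_eq_sum_range_add_suffixSum (by omega : k < S.length)]
  rw [Int.even_iff] at hprefix
  omega

lemma suffixSum_rightmostOddIdx_emod_two (hi : rightmostOddIdx S < S.length) :
    suffixSum S (rightmostOddIdx S) % 2 = (S.sum + 1) % 2 := by
  have hprefix : Even (∑ j ∈ range (rightmostOddIdx S), entry S j) :=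
    even_sum _ fun j hj => even_entry_of_lt_rightmostOddIdx (by simpa using hj)
  have hodd := odd_entry_rightmostOddIdx hi
  rw [sum_eq_sum_range_add_suffixSum hi, sum_range_succ]
  rw [Int.even_iff] at hprefix
  rw [Int.odd_iff] at hodd
  omega

lemma binaryDigit_P_of_increment (hr : ruleOf S = Rule.increment) :
    (∀ k < rightmostOddIdx S, binaryDigit S k = (S.sum % 2).toNat ∧
      binaryDigit (P S) k = ((S.sum + 1) % 2).toNat) ∧
    binaryDigit S (rightmostOddIdx S) = ((S.sum + 1) % 2).toNat ∧
    binaryDigit (P S) (rightmostOddIdx S) = (S.sum % 2).toNat ∧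
    ∀ k, rightmostOddIdx S < k → binaryDigit (P S) k = binaryDigit S k := by
  have hi := rightmostOddIdx_lt_length_of_increment hr
  have hi' := suffixSum_rightmostOddIdx_emod_two hi
  simp only [binaryDigit, suffixSum_P_of_increment hr]
  refine ⟨fun k hk => ?_, ?_, ?_, fun k hk => ?_⟩
  · have := suffixSum_emod_two_of_lt_rightmostOddIdx hk hi
    rw [if_pos hk.le]
    omega
  · rw [hi']
  · rw [if_pos le_rfl]
    omega
  · rw [if_neg (by omega), add_zero]

lemma exists_nOf_P_of_increment (hr : ruleOf S = Rule.increment) :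
    ∃ q, (Odd S.sum ∧ nOf S + 1 = 2 ^ rightmostOddIdx S * (2 * q + 1) ∧ nOf (P S) = nOf S + 1) ∨
      (¬ Odd S.sum ∧ nOf (P S) + 1 = 2 ^ rightmostOddIdx S * (2 * q + 1) ∧
        nOf S = nOf (P S) + 1) := by
  have hiL : rightmostOddIdx S < ell S := by
    have := rightmostOddIdx_add_one_lt_length_of_increment hr
    simp only [ell]
    omega
  obtain ⟨hlow, hS, hPS, hhigh⟩ := binaryDigit_P_of_increment hr
  rw [nOf_eq_sum_binaryDigit, nOf_eq_sum_binaryDigit, ell_P_of_increment hr]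
  by_cases hs : Odd S.sum
  · have hs2 := Int.odd_iff.mp hs
    obtain ⟨q, hq⟩ := sum_two_pow_mul_carry hiL
      (fun k hk => by have := hlow k hk; omega) (by omega) (by omega) hhigh
    exact ⟨q, .inl ⟨hs, hq⟩⟩
  · have hs2 : S.sum % 2 = 0 := by rw [Int.not_odd_iff] at hs; exact hs
    obtain ⟨q, hq⟩ := sum_two_pow_mul_carry hiL
      (fun k hk => by have := hlow k hk; omega) (by omega) (by omega)
      (fun k hk => (hhigh k hk).symm)
    exact ⟨q, .inr ⟨hs, hq⟩⟩

lemma natCast_nOf_P_of_increment (hr : ruleOf S = Rule.increment) :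
    (nOf (P S) : ℤ) = nOf S + sigma S := by
  obtain ⟨q, ⟨hs, -, h⟩ | ⟨hs, -, h⟩⟩ := exists_nOf_P_of_increment hr <;>
  · simp only [sigma, hs, if_true, if_false]
    omega

lemma dd_nOf_P_of_increment (hr : ruleOf S = Rule.increment) (k : ℕ) :
    dd k (nOf S) (nOf (P S)) = if k = 0 ∨ k = rightmostOddIdx S + 1 then 1 else 0 := by
  obtain ⟨q, ⟨-, hq, h⟩ | ⟨-, hq, h⟩⟩ := exists_nOf_P_of_increment hr
  · rw [h]
    exact dd_add_one hq k
  · rw [h, dd_comm]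
    exact dd_add_one hq k

lemma entry_P_of_increment_of_pos (hr : ruleOf S = Rule.increment) {k : ℕ} (hk : 1 ≤ k) :
    entry (P S) k = entry S k + dd k (nOf S) (nOf (P S)) := by
  rw [entry_P_of_increment hr, dd_nOf_P_of_increment hr]
  split_ifs <;> omega

lemma entry_zero_P_of_increment (hr : ruleOf S = Rule.increment) :
    entry (P S) 0 = entry S 0 - dd 0 (nOf S) (nOf (P S)) := by
  rw [entry_P_of_increment hr, dd_nOf_P_of_increment hr]
  simp

lemma sigma_P_of_increment (hr : ruleOf S = Rule.increment) : sigma (P S) = sigma S := by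
  rw [sigma, sigma, sum_P_of_increment hr]

end Increment

lemma sigma_eq_one_or_eq_neg_one (S : State) : sigma S = 1 ∨ sigma S = -1 := by
  unfold sigma
  split_ifs <;> simp

lemma iterate_of_increment (S : State) (m : ℕ)
    (hinc : ∀ j < m, ruleOf (P^[j] S) = Rule.increment) :
    sigma (P^[m] S) = sigma S ∧ (nOf (P^[m] S) : ℤ) = nOf S + sigma S * m ∧
      (∀ k, 1 ≤ k → entry (P^[m] S) k = entry S k + dd k (nOf S) (nOf (P^[m] S))) ∧
      entry (P^[m] S) 0 = entry S 0 - dd 0 (nOf S) (nOf (P^[m] S)) := by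
  induction m with
  | zero => simp [dd_self]
  | succ m ih =>
    obtain ⟨hsigma, hn, hpos, hzero⟩ := ih fun j hj => hinc j (by omega)
    have hr := hinc m (by omega)
    have hn' := natCast_nOf_P_of_increment hr
    have hdd : ∀ k, dd k (nOf S) (nOf (P (P^[m] S))) =
        dd k (nOf S) (nOf (P^[m] S)) + dd k (nOf (P^[m] S)) (nOf (P (P^[m] S))) := fun k =>
      dd_add_of_between (by
        rw [hsigma] at hn'
        rcases sigma_eq_one_or_eq_neg_one S with h | h <;> rw [h] at hn hn' <;> omega)
    rw [Function.iterate_succ_apply']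
    refine ⟨by rw [sigma_P_of_increment hr, hsigma], by push_cast; rw [hn', hsigma, hn]; ring,
      fun k hk => ?_, ?_⟩
    · rw [entry_P_of_increment_of_pos hr hk, hpos k hk, hdd]
      push_cast
      ring
    · rw [entry_zero_P_of_increment hr, hzero, hdd]
      push_cast
      ring

theorem statement_6_general (S S' : State) (m : ℕ)
    (hm : P^[m] S = S')
    (hinc : ∀ j < m, ruleOf (P^[j] S) = Rule.increment) :
    (∀ i, 1 ≤ i → i ≤ ell S → entry S' i = entry S i + (dd i (nOf S) (nOf S') : ℤ)) ∧
      entry S' 0 = entry S 0 - (dd 0 (nOf S) (nOf S') : ℤ) := by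
  obtain ⟨-, -, hpos, hzero⟩ := iterate_of_increment S m hinc
  subst hm
  exact ⟨fun i hi _ => hpos i hi, hzero⟩

/-- If `S ↦ S'` and every rule applied in `S → S'` is an Increment rule,
then, with `n = n(S)`, `n' = n(S')`, `ℓ = ℓ(S)`: for `1 ≤ i ≤ ℓ` one has
`a_i(S') = a_i(S) + d_i(n, n')`, and `a_0(S') = a_0(S) - d_0(n, n')`. -/
theorem statement_6 (S S' : State) (hS : S ≠ []) (m : ℕ)
    (hm : P^[m] S = S')
    (hinc : ∀ j < m, ruleOf (P^[j] S) = Rule.increment) :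
    (∀ i, 1 ≤ i → i ≤ ell S → entry S' i = entry S i + (dd i (nOf S) (nOf S') : ℤ)) ∧
      entry S' 0 = entry S 0 - (dd 0 (nOf S) (nOf S') : ℤ) :=
  statement_6_general S S' m hm hinc

end Skelet17
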